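/- arXiv:1506.07104 — 5 statements merged into one kernel-verified Lean document; each statement's English description precedes it below -/
import Mathlib

section
/- The function κ is strictly convex on all of ℝ, i.e. StrictConvexOn ℝ Set.univ κ. -/
noncomputable def kappa (η : ℝ) : ℝ := if η = 0 then 1 else (Real.exp η - 1) / η

lemma kappa_eq_integral (η : ℝ) : kappa η = ∫ t in (0:ℝ)..1, Real.exp (t * η) := by
  rcases eq_or_ne η 0 with h | h
  · simp [kappa, h]
  · rw [kappa, if_neg h, intervalIntegral.integral_comp_mul_right Real.exp h]
    simp [integral_exp, smul_eq_mul, div_eq_inv_mul]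

theorem kappa_strictConvexOn : StrictConvexOn ℝ Set.univ kappa := by
  refine ⟨convex_univ, ?_⟩
  intro x _ y _ hxy a b ha hb hab
  simp only [smul_eq_mul, kappa_eq_integral]
  have key : ∀ t ∈ Set.Ioc (0:ℝ) 1,
      Real.exp (t * (a * x + b * y)) < a * Real.exp (t * x) + b * Real.exp (t * y) := by
    intro t ht
    have h := strictConvexOn_exp.2 (Set.mem_univ (t * x)) (Set.mem_univ (t * y))
      (fun hc => hxy (mul_left_cancel₀ (ne_of_gt ht.1) hc)) ha hb hab
    simpa [smul_eq_mul, mul_add, mul_comm, mul_left_comm, mul_assoc] using h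
  have hlt := intervalIntegral.integral_lt_integral_of_continuousOn_of_le_of_exists_lt
    (f := fun t => Real.exp (t * (a * x + b * y)))
    (g := fun t => a * Real.exp (t * x) + b * Real.exp (t * y))
    (a := 0) (b := 1) one_pos
    (by fun_prop) (by fun_prop)
    (fun t ht => (key t ht).le)
    ⟨1, Set.right_mem_Icc.2 one_pos.le, key 1 ⟨one_pos, le_refl 1⟩⟩
  calc (∫ t in (0:ℝ)..1, Real.exp (t * (a * x + b * y)))
      < ∫ t in (0:ℝ)..1, (a * Real.exp (t * x) + b * Real.exp (t * y)) := hlt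
    _ = a • (∫ t in (0:ℝ)..1, Real.exp (t * x)) + b • (∫ t in (0:ℝ)..1, Real.exp (t * y)) := by
        rw [intervalIntegral.integral_add]
        · simp [intervalIntegral.integral_const_mul]
        · exact (IntervalIntegrable.const_mul (by apply Continuous.intervalIntegrable; fun_prop) a)
        · exact (IntervalIntegrable.const_mul (by apply Continuous.intervalIntegrable; fun_prop) b)
end

section
/- The compensator tends to +∞ as (ξ, α) → (0, 0) with ξ > 0; formally, Filter.Tendsto (fun p : ℝ × ℝ => ω p.1 p.2) ((nhdsWithin 0 (Set.Ioi 0)) ×ˢ (nhds 0)) Filter.atTop. -/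
noncomputable def omega (ξ α : ℝ) : ℝ :=
  if α = 0 then -Real.log ξ else (ξ ^ (-α) - 1) / α

theorem omega_tendsto_atTop :
    Filter.Tendsto (fun p : ℝ × ℝ => omega p.1 p.2)
      ((nhdsWithin (0:ℝ) (Set.Ioi 0)) ×ˢ (nhds (0:ℝ))) Filter.atTop := by
  rw [Filter.tendsto_atTop]
  intro M
  set K := max M 1 with hKdef
  have hK1 : (1:ℝ) ≤ K := le_max_right _ _
  have hMK : M ≤ K := le_max_left _ _
  have hKpos : (0:ℝ) < K := lt_of_lt_of_le one_pos hK1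
  have h1 : ∀ᶠ ξ in nhdsWithin (0:ℝ) (Set.Ioi 0),
      ξ ∈ Set.Ioo (0:ℝ) (Real.exp (-(2*K))) := by
    apply Ioo_mem_nhdsGT_of_mem
    exact ⟨le_refl _, Real.exp_pos _⟩
  have h2 : ∀ᶠ α in nhds (0:ℝ), |α| < 1/(2*K) := by
    have : (0:ℝ) < 1/(2*K) := by positivity
    have h := Metric.ball_mem_nhds (0:ℝ) this
    filter_upwards [h] with a ha
    simpa [Real.dist_eq] using ha
  filter_upwards [h1.prod_mk h2] with p hp
  obtain ⟨⟨hξ0, hξδ⟩, hα⟩ := hp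
  set ξ := p.1
  set α := p.2
  have hlog : Real.log ξ < -(2*K) := by
    have := Real.log_lt_log hξ0 hξδ
    rwa [Real.log_exp] at this
  have hlogK : 2*K ≤ -Real.log ξ := by linarith
  have hKM : M ≤ K := hMK
  suffices h : K ≤ omega ξ α by linarith
  rcases lt_trichotomy α 0 with hneg | hzero | hpos
  · -- α < 0 case
    have hb : 0 < -α := by linarith
    have hbK : -α < 1/(2*K) := by
      have := hα; rw [abs_of_neg hneg] at this; linarith
    have hrpow : ξ ^ (-α) = Real.exp ((-α) * Real.log ξ) := by rw [Real.rpow_def_of_pos hξ0, mul_comm]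
    have homega : omega ξ α = (1 - ξ ^ (-α)) / (-α) := by
      simp only [omega, if_neg (ne_of_lt hneg)]
      rw [div_eq_div_iff (ne_of_lt hneg) (by linarith : (-α) ≠ 0)]
      ring
    rw [homega]
    set t := (-α) * (-Real.log ξ) with htdef
    have ht0 : 0 < t := by
      apply mul_pos hb; linarith
    have hval : ξ ^ (-α) = Real.exp (-t) := by
      rw [hrpow, htdef]; ring_nf
    rcases le_or_gt 1 t with h1t | h1t
    · -- t ≥ 1: ξ^(-α) ≤ e⁻¹ ≤ 1/2
      have : ξ ^ (-α) ≤ Real.exp (-1) := by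
        rw [hval]; exact Real.exp_le_exp.mpr (by linarith)
      have hexp : Real.exp (-1) ≤ 1/2 := by
        rw [Real.exp_neg, inv_le_comm₀ (Real.exp_pos 1) (by norm_num)]
        nlinarith [Real.add_one_le_exp (1:ℝ)]
      have hnum : (1:ℝ)/2 ≤ 1 - ξ ^ (-α) := by linarith
      rw [le_div_iff₀ hb]
      have hKhalf : K * (1/(2*K)) = 1/2 := by field_simp
      nlinarith [mul_lt_mul_of_pos_left hbK hKpos]
    · -- t < 1: use 1 - e^{-t} ≥ t/2
      rw [le_div_iff₀ hb]
      have hu : Real.exp (-t) * (1 + t) ≤ 1 := by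
        have h1 : t + 1 ≤ Real.exp t := Real.add_one_le_exp t
        have h2 : Real.exp (-t) * Real.exp t = 1 := by
          rw [← Real.exp_add]; simp
        nlinarith [Real.exp_pos (-t)]
      have htK : 2*K*(-α) ≤ t := by
        rw [htdef]
        have := mul_le_mul_of_nonneg_left hlogK (le_of_lt hb)
        linarith
      nlinarith [Real.exp_pos (-t)]
  · simp only [omega, if_pos hzero]; linarith
  · -- α > 0 case
    have hrpow : ξ ^ (-α) = Real.exp ((-α) * Real.log ξ) := by rw [Real.rpow_def_of_pos hξ0, mul_comm]
    simp only [omega, if_neg (ne_of_gt hpos)]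
    rw [hrpow]
    have hexp : (-α) * Real.log ξ + 1 ≤ Real.exp ((-α) * Real.log ξ) :=
      Real.add_one_le_exp _
    rw [le_div_iff₀ hpos]
    nlinarith
end

section
/- For every ξ ∈ (0,1) and all α, β ∈ ℝ, Ω(ξ, α, β) ≤ ξ^(−max(|α|, |β|))·(Real.log ξ)². -/
noncomputable def Omega2 (ξ α β : ℝ) : ℝ :=
  if α = β then (1/2) * (Real.log ξ) ^ 2 else (omega ξ α - omega ξ β) / (α - β)

lemma exp_sub_exp_le_aux (x y : ℝ) (h : y ≤ x) :
    Real.exp x - Real.exp y ≤ (x - y) * Real.exp x := by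
  have h1 : (y - x) + 1 ≤ Real.exp (y - x) := Real.add_one_le_exp _
  have h2 : Real.exp x * ((y - x) + 1) ≤ Real.exp x * Real.exp (y - x) := by
    exact mul_le_mul_of_nonneg_left h1 (Real.exp_pos x).le
  rw [← Real.exp_add] at h2
  have : x + (y - x) = y := by ring
  rw [this] at h2
  nlinarith

lemma abs_exp_sub_exp_le (x y : ℝ) :
    |Real.exp x - Real.exp y| ≤ |x - y| * Real.exp (max x y) := by
  rcases le_total y x with h | h
  · rw [abs_of_nonneg (by linarith [Real.exp_le_exp.mpr h] : (0:ℝ) ≤ Real.exp x - Real.exp y),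
      abs_of_nonneg (by linarith : (0:ℝ) ≤ x - y), max_eq_left h]
    exact exp_sub_exp_le_aux x y h
  · rw [abs_sub_comm, abs_sub_comm x y,
      abs_of_nonneg (by linarith [Real.exp_le_exp.mpr h] : (0:ℝ) ≤ Real.exp y - Real.exp x),
      abs_of_nonneg (by linarith : (0:ℝ) ≤ y - x), max_eq_right h]
    exact exp_sub_exp_le_aux y x h

lemma omega_eq_integral (ξ : ℝ) (hξ : 0 < ξ) (γ : ℝ) :
    omega ξ γ = ∫ s in (0:ℝ)..(-Real.log ξ), Real.exp (γ * s) := by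
  rcases eq_or_ne γ 0 with rfl | hγ
  · simp [omega]
  · rw [intervalIntegral.integral_comp_mul_left _ hγ]
    rw [integral_exp]
    simp only [omega, hγ, if_false]
    rw [Real.rpow_def_of_pos hξ]
    rw [smul_eq_mul, mul_zero, Real.exp_zero]
    rw [show γ * -Real.log ξ = -γ * Real.log ξ by ring]
    field_simp

theorem Omega2_estimate (ξ : ℝ) (hξ : ξ ∈ Set.Ioo (0:ℝ) 1) (α β : ℝ) :
    Omega2 ξ α β ≤ ξ ^ (-(max |α| |β|)) * (Real.log ξ) ^ 2 := by
  obtain ⟨hξ0, hξ1⟩ := hξ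
  set t : ℝ := -Real.log ξ with ht_def
  have ht : 0 < t := by
    have := Real.log_neg hξ0 hξ1
    linarith
  set M : ℝ := max |α| |β| with hM_def
  have hM : 0 ≤ M := le_trans (abs_nonneg α) (le_max_left _ _)
  have hrhs : ξ ^ (-M) * (Real.log ξ) ^ 2 = Real.exp (M * t) * t ^ 2 := by
    rw [Real.rpow_def_of_pos hξ0]
    have : (Real.log ξ) ^ 2 = t ^ 2 := by rw [ht_def]; ring
    rw [this]
    ring_nf
    rw [show M * t = -(Real.log ξ * M) by rw [ht_def]; ring]
    ring
  rw [hrhs]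
  rcases eq_or_ne α β with rfl | hαβ
  · rw [Omega2, if_pos rfl]
    have h1 : (1:ℝ) ≤ Real.exp (M * t) := by
      rw [← Real.exp_zero]
      exact Real.exp_le_exp.mpr (by positivity)
    have ht2 : (0:ℝ) ≤ t ^ 2 := sq_nonneg t
    have : (Real.log ξ) ^ 2 = t ^ 2 := by rw [ht_def]; ring
    rw [this]
    nlinarith
  · rw [Omega2, if_neg hαβ]
    rw [omega_eq_integral ξ hξ0 α, omega_eq_integral ξ hξ0 β]
    have hInt : ∀ γ : ℝ, IntervalIntegrable (fun s => Real.exp (γ * s))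
        MeasureTheory.volume 0 t := by
      intro γ
      exact (Real.continuous_exp.comp (continuous_const.mul continuous_id)).intervalIntegrable _ _
    rw [← intervalIntegral.integral_sub (hInt α) (hInt β)]
    have key : ‖∫ s in (0:ℝ)..t, (Real.exp (α * s) - Real.exp (β * s))‖ ≤
        (|α - β| * (t * Real.exp (M * t))) * |t - 0| := by
      apply intervalIntegral.norm_integral_le_of_norm_le_const
      intro s hs
      rw [Set.uIoc_of_le ht.le] at hs
      obtain ⟨hs0, hst⟩ := hs
      have h1 : |Real.exp (α * s) - Real.exp (β * s)| ≤
          |α * s - β * s| * Real.exp (max (α * s) (β * s)) := abs_exp_sub_exp_le _ _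
      have h2 : |α * s - β * s| = |α - β| * s := by
        rw [show α * s - β * s = (α - β) * s by ring, abs_mul, abs_of_nonneg hs0.le]
      have h3 : max (α * s) (β * s) ≤ M * t := by
        apply max_le
        · calc α * s ≤ |α| * s := mul_le_mul_of_nonneg_right (le_abs_self α) hs0.le
            _ ≤ M * t := mul_le_mul (le_max_left _ _) hst (hs0.le) hM
        · calc β * s ≤ |β| * s := mul_le_mul_of_nonneg_right (le_abs_self β) hs0.le
            _ ≤ M * t := mul_le_mul (le_max_right _ _) hst (hs0.le) hM
      calc ‖Real.exp (α * s) - Real.exp (β * s)‖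
          = |Real.exp (α * s) - Real.exp (β * s)| := rfl
        _ ≤ |α * s - β * s| * Real.exp (max (α * s) (β * s)) := h1
        _ = |α - β| * s * Real.exp (max (α * s) (β * s)) := by rw [h2]
        _ ≤ |α - β| * t * Real.exp (M * t) := by
            apply mul_le_mul
            · exact mul_le_mul_of_nonneg_left hst (abs_nonneg _)
            · exact Real.exp_le_exp.mpr h3
            · positivity
            · positivity
        _ = |α - β| * (t * Real.exp (M * t)) := by ring
    have habs : |t - 0| = t := by rw [sub_zero, abs_of_pos ht]
    rw [habs, Real.norm_eq_abs] at key
    have hdiv : (∫ s in (0:ℝ)..t, (Real.exp (α * s) - Real.exp (β * s))) / (α - β) ≤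
        |(∫ s in (0:ℝ)..t, (Real.exp (α * s) - Real.exp (β * s))) / (α - β)| := le_abs_self _
    rw [abs_div] at hdiv
    have hαβ' : (0:ℝ) < |α - β| := abs_pos.mpr (sub_ne_zero.mpr hαβ)
    calc (∫ s in (0:ℝ)..t, (Real.exp (α * s) - Real.exp (β * s))) / (α - β)
        ≤ |∫ s in (0:ℝ)..t, (Real.exp (α * s) - Real.exp (β * s))| / |α - β| := hdiv
      _ ≤ (|α - β| * (t * Real.exp (M * t)) * t) / |α - β| := by
          gcongr
      _ = Real.exp (M * t) * t ^ 2 := by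
          field_simp
end

section
/- For all γ₁, γ₂ ∈ ℝ with γ₁ ≠ γ₂ and every r > 0, r · deriv (fun s => Ω(s, γ₁, γ₂)) r = −(ω(r, γ₁) + γ₂·Ω(r, γ₁, γ₂)). (This is the formula L_X Ω_{γ₁,γ₂} = −(ω_{γ₁} + γ₂ Ω_{γ₁,γ₂}) for the radial derivation L_X = r ∂/∂r − ρ ∂/∂ρ.) -/
theorem Omega2_radial_derivation (γ₁ γ₂ : ℝ) (hγ : γ₁ ≠ γ₂) (r : ℝ) (hr : 0 < r) :
    r * deriv (fun s => Omega2 s γ₁ γ₂) r = -(omega r γ₁ + γ₂ * Omega2 r γ₁ γ₂) := by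
  have hr0 : r ≠ 0 := ne_of_gt hr
  have hω : ∀ α : ℝ, HasDerivAt (fun s => omega s α) (-r ^ (-α - 1)) r := by
    intro α
    rcases eq_or_ne α 0 with h0 | h0
    · subst h0
      have := (Real.hasDerivAt_log hr0).neg
      simp only [omega, if_pos rfl]
      refine this.congr_deriv ?_
      rw [neg_zero, zero_sub, Real.rpow_neg_one]
    · have h1 : HasDerivAt (fun s : ℝ => s ^ (-α)) (-α * r ^ (-α - 1)) r :=
        Real.hasDerivAt_rpow_const (Or.inl hr0)
      have h2 := (h1.sub_const 1).div_const α
      simp only [omega, if_neg h0]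
      refine h2.congr_deriv ?_
      field_simp
    -- derivative of Omega2
  have hd : γ₁ - γ₂ ≠ 0 := sub_ne_zero.mpr hγ
  have hΩ : HasDerivAt (fun s => Omega2 s γ₁ γ₂)
      ((-r ^ (-γ₁ - 1) - -r ^ (-γ₂ - 1)) / (γ₁ - γ₂)) r := by
    have := ((hω γ₁).sub (hω γ₂)).div_const (γ₁ - γ₂)
    refine this.congr_of_eventuallyEq (Filter.Eventually.of_forall fun s => ?_)
    simp [Omega2, hγ]
  rw [hΩ.deriv]
  have hmul : ∀ α : ℝ, r * r ^ (-α - 1) = r ^ (-α) := by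
    intro α
    rw [show -α - 1 = -α + (-1) by ring, Real.rpow_add hr, Real.rpow_neg_one]
    field_simp
  have hL : r * ((-r ^ (-γ₁ - 1) - -r ^ (-γ₂ - 1)) / (γ₁ - γ₂))
      = (r ^ (-γ₂) - r ^ (-γ₁)) / (γ₁ - γ₂) := by
    field_simp
    rw [show r * (-r ^ (-γ₁ - 1) - -r ^ (-γ₂ - 1)) = r * r ^ (-γ₂ - 1) - r * r ^ (-γ₁ - 1) by ring,
      hmul, hmul]
  rw [hL]
  -- algebraic identity for the RHS
  simp only [Omega2, if_neg hγ, omega]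
  rcases eq_or_ne γ₁ 0 with h1 | h1
  · subst h1
    have : r ^ (-(0:ℝ)) = 1 := by simp
    rw [if_pos rfl, if_neg (Ne.symm hγ)]
    rw [this]
    field_simp
    ring
  · rcases eq_or_ne γ₂ 0 with h2 | h2
    · subst h2
      have : r ^ (-(0:ℝ)) = 1 := by simp
      rw [if_neg h1, if_pos rfl, this]
      field_simp
      ring
    · rw [if_neg h1, if_neg h2]
      field_simp
      ring
end

section
/- Let a, b ∈ ℝ, let n ∈ ℕ, and let γ₁, …, γₙ ≥ 0 and c₁, …, cₙ ∈ ℝ. Define the general monomial M(r, ρ) = r^a · ρ^b · ∏_{j=1}^n ω(r, γ_j)^{c_j} for (r, ρ) ∈ (0,1)². Let h : (0,1)² → ℝ be continuously differentiable and suppose that h(r, ρ) → 0 and (L_X h)(r, ρ) = r·∂h/∂r(r,ρ) − ρ·∂h/∂ρ(r,ρ) → 0 as (r, ρ) → (0, 0) within (0,1)². Then the quotient (L_X[M·(1 + h)])(r, ρ) / M(r, ρ) tends to a − b − ∑_{j=1}^n γ_j·c_j as (r, ρ) → (0, 0) within (0,1)². (Consequently, if a − b − ∑ γ_j c_j ≠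 0, one can write L_X[M(1+h)] = (a − b − ∑ γ_j c_j)·M·(1 + g) with g → 0; this is the content of Lemma 5.2 of the paper.) -/
lemma omega_pos {r γ : ℝ} (hr : r ∈ Set.Ioo (0:ℝ) 1) (hγ : 0 ≤ γ) : 0 < omega r γ := by
  rcases hγ.eq_or_lt with rfl | h0
  · rw [omega, if_pos rfl]
    have := Real.log_neg hr.1 hr.2
    linarith
  · rw [omega, if_neg (ne_of_gt h0)]
    have h1 : 1 < r ^ (-γ) := by
      rw [Real.one_lt_rpow_iff_of_pos hr.1]
      exact Or.inr ⟨hr.2, by linarith⟩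
    exact div_pos (by linarith) h0

lemma hasDerivAt_omega {r : ℝ} (hr : 0 < r) (γ : ℝ) :
    HasDerivAt (fun x => omega x γ) (-(r ^ (-(γ + 1)))) r := by
  rcases eq_or_ne γ 0 with rfl | hγ
  · simp only [omega, reduceIte]
    have := (Real.hasDerivAt_log hr.ne').neg
    refine this.congr_deriv ?_
    rw [show -(0+1:ℝ) = -1 by ring, Real.rpow_neg_one]
  · simp only [omega, if_neg hγ]
    have h1 : HasDerivAt (fun x : ℝ => x ^ (-γ)) (-γ * r ^ (-γ - 1)) r :=
      Real.hasDerivAt_rpow_const (Or.inl hr.ne')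
    have := (h1.sub_const 1).div_const γ
    refine this.congr_deriv ?_
    rw [show (-(γ+1) : ℝ) = -γ - 1 by ring]
    field_simp

lemma hasDerivAt_finset_prod {ι : Type*} (s : Finset ι) (f : ι → ℝ → ℝ) (ℓ : ι → ℝ) (x : ℝ)
    (hd : ∀ i ∈ s, HasDerivAt (f i) (f i x * ℓ i) x) :
    HasDerivAt (fun y => ∏ i ∈ s, f i y) ((∏ i ∈ s, f i x) * ∑ i ∈ s, ℓ i) x := by
  induction s using Finset.cons_induction with
  | empty => simpa using hasDerivAt_const x (1:ℝ)
  | cons a s ha ih =>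
      have h1 := hd a (Finset.mem_cons_self a s)
      have h2 := ih (fun i hi => hd i (Finset.mem_cons_of_mem hi))
      have := h1.mul h2
      simp only [Finset.prod_cons, Finset.sum_cons]
      refine (h1.mul h2).congr_deriv ?_
      ring

lemma tendsto_psi {γ : ℝ} (hγ : 0 ≤ γ) :
    Filter.Tendsto (fun r => -(r ^ (-γ)) / omega r γ)
      (nhdsWithin 0 (Set.Ioo (0:ℝ) 1)) (nhds (-γ)) := by
  rcases hγ.eq_or_lt with rfl | h0
  · have key : ∀ r ∈ Set.Ioo (0:ℝ) 1, -(r ^ (-(0:ℝ))) / omega r 0 = -(-Real.log r)⁻¹ := by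
      intro r hr
      rw [omega, if_pos rfl, neg_zero, Real.rpow_zero]
      rw [div_eq_mul_inv]
      ring
    have hlog : Filter.Tendsto (fun r => -Real.log r) (nhdsWithin 0 (Set.Ioo (0:ℝ) 1))
        Filter.atTop := by
      have := Real.tendsto_log_nhdsGT_zero.mono_left
        (nhdsWithin_mono (0:ℝ) (fun x hx => hx.1 : Set.Ioo (0:ℝ) 1 ⊆ Set.Ioi 0))
      exact Filter.tendsto_neg_atTop_iff.mpr this
    have hmain := (hlog.inv_tendsto_atTop).neg
    rw [neg_zero] at hmain
    rw [show (-(0:ℝ)) = 0 by norm_num]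
    refine hmain.congr' ?_
    filter_upwards [self_mem_nhdsWithin] with r hr
    simpa using (key r hr).symm
  · have hrp : Filter.Tendsto (fun r : ℝ => r ^ γ) (nhdsWithin 0 (Set.Ioo (0:ℝ) 1))
        (nhds 0) := by
      have hc : ContinuousAt (fun r : ℝ => r ^ γ) 0 :=
        Real.continuousAt_rpow_const 0 γ (Or.inr hγ)
      have := hc.tendsto.mono_left (nhdsWithin_le_nhds (s := Set.Ioo (0:ℝ) 1))
      simpa [Real.zero_rpow (ne_of_gt h0)] using this
    have hlim : Filter.Tendsto (fun r : ℝ => -γ / (1 - r ^ γ)) (nhdsWithin 0 (Set.Ioo (0:ℝ) 1))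
        (nhds (-γ)) := by
      have h1 : Filter.Tendsto (fun r : ℝ => 1 - r ^ γ) (nhdsWithin 0 (Set.Ioo (0:ℝ) 1))
          (nhds 1) := by
        have := (tendsto_const_nhds (x := (1:ℝ))
          (f := nhdsWithin 0 (Set.Ioo (0:ℝ) 1))).sub hrp
        simpa using this
      have := (tendsto_const_nhds (x := -γ) (f := nhdsWithin 0 (Set.Ioo (0:ℝ) 1))).div h1
        one_ne_zero
      rwa [div_one] at this
    refine hlim.congr' ?_
    filter_upwards [self_mem_nhdsWithin] with r hr
    have hrr : (0:ℝ) < r := hr.1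
    have hu : r ^ γ ≠ 1 := by
      have : r ^ γ < 1 := Real.rpow_lt_one (le_of_lt hrr) hr.2 h0
      exact ne_of_lt this
    have hu0 : r ^ γ ≠ 0 := ne_of_gt (Real.rpow_pos_of_pos hrr γ)
    have h1u : (1:ℝ) - r ^ γ ≠ 0 := sub_ne_zero.mpr fun e => hu e.symm
    rw [omega, if_neg (ne_of_gt h0), Real.rpow_neg (le_of_lt hrr)]
    field_simp

/-- The Lie derivative along the radial vector field `X = r ∂/∂r − ρ ∂/∂ρ`. -/
noncomputable def LX (f : ℝ × ℝ → ℝ) (p : ℝ × ℝ) : ℝ :=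
  p.1 * deriv (fun r => f (r, p.2)) p.1 - p.2 * deriv (fun ρ => f (p.1, ρ)) p.2

/-- The general monomial `M(r, ρ) = r^a ρ^b ∏_j ω(r, γ_j)^{c_j}`. -/
noncomputable def genMonomial (a b : ℝ) {n : ℕ} (γ c : Fin n → ℝ) (p : ℝ × ℝ) : ℝ :=
  p.1 ^ a * p.2 ^ b * ∏ j, (omega p.1 (γ j)) ^ (c j)

theorem LX_monomial_times_unit (a b : ℝ) (n : ℕ) (γ c : Fin n → ℝ)
    (hγ : ∀ j, 0 ≤ γ j) (h : ℝ × ℝ → ℝ)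
    (hC1 : ContDiffOn ℝ 1 h (Set.Ioo (0:ℝ) 1 ×ˢ Set.Ioo (0:ℝ) 1))
    (hh0 : Filter.Tendsto h
      (nhdsWithin ((0:ℝ), (0:ℝ)) (Set.Ioo (0:ℝ) 1 ×ˢ Set.Ioo (0:ℝ) 1)) (nhds 0))
    (hLXh0 : Filter.Tendsto (LX h)
      (nhdsWithin ((0:ℝ), (0:ℝ)) (Set.Ioo (0:ℝ) 1 ×ˢ Set.Ioo (0:ℝ) 1)) (nhds 0)) :
    Filter.Tendsto
      (fun p : ℝ × ℝ =>
        LX (fun q => genMonomial a b γ c q * (1 + h q)) p / genMonomial a b γ c p)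
      (nhdsWithin ((0:ℝ), (0:ℝ)) (Set.Ioo (0:ℝ) 1 ×ˢ Set.Ioo (0:ℝ) 1))
      (nhds (a - b - ∑ j, γ j * c j)) := by
  set s : Set (ℝ × ℝ) := Set.Ioo (0:ℝ) 1 ×ˢ Set.Ioo (0:ℝ) 1 with hs_def
  have hs : IsOpen s := isOpen_Ioo.prod isOpen_Ioo
  set F := nhdsWithin ((0:ℝ), (0:ℝ)) s with hF_def
  set Q : ℝ × ℝ → ℝ := fun p =>
    (a - b + ∑ j, c j * (-(p.1 ^ (-(γ j))) / omega p.1 (γ j))) * (1 + h p) + LX h p with hQ_def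
  -- Step 1: Q tends to the limit
  have hfst : Filter.Tendsto (fun p : ℝ × ℝ => p.1) F (nhdsWithin 0 (Set.Ioo (0:ℝ) 1)) := by
    rw [tendsto_nhdsWithin_iff]
    constructor
    · exact (continuous_fst.tendsto _).mono_left nhdsWithin_le_nhds
    · filter_upwards [self_mem_nhdsWithin] with p hp
      exact hp.1
  have hsum : Filter.Tendsto
      (fun p : ℝ × ℝ => ∑ j, c j * (-(p.1 ^ (-(γ j))) / omega p.1 (γ j))) F
      (nhds (∑ j, c j * (-(γ j)))) := by
    apply tendsto_finset_sum
    intro j _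
    exact (((tendsto_psi (hγ j)).comp hfst).const_mul (c j))
  have hQlim : Filter.Tendsto Q F (nhds (a - b - ∑ j, γ j * c j)) := by
    have h1 : Filter.Tendsto (fun p : ℝ × ℝ => 1 + h p) F (nhds 1) := by
      have := (tendsto_const_nhds (x := (1:ℝ)) (f := F)).add hh0
      simpa using this
    have := (((tendsto_const_nhds (x := a - b) (f := F)).add hsum).mul h1).add hLXh0
    have heq : (a - b + ∑ j, c j * (-(γ j))) * 1 + 0 = a - b - ∑ j, γ j * c j := by
      have h2 : ∑ j, c j * (-(γ j)) = -∑ j, γ j * c j := by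
        rw [← Finset.sum_neg_distrib]
        exact Finset.sum_congr rfl fun j _ => by ring
      rw [h2]; ring
    rw [heq] at this
    exact this
  -- Step 2: eventual equality
  refine hQlim.congr' ?_
  filter_upwards [self_mem_nhdsWithin] with p hp
  obtain ⟨hr, hρ⟩ := hp
  have hr0 : (0:ℝ) < p.1 := hr.1
  have hρ0 : (0:ℝ) < p.2 := hρ.1
  -- positivity of factors
  have hωpos : ∀ j, 0 < omega p.1 (γ j) := fun j => omega_pos hr (hγ j)
  have hPpos : 0 < ∏ j, omega p.1 (γ j) ^ c j :=
    Finset.prod_pos fun j _ => Real.rpow_pos_of_pos (hωpos j) _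
  have hApos : 0 < p.1 ^ a := Real.rpow_pos_of_pos hr0 a
  have hBpos : 0 < p.2 ^ b := Real.rpow_pos_of_pos hρ0 b
  -- differentiability of h slices
  have hdh : DifferentiableAt ℝ h p :=
    (hC1.contDiffAt (hs.mem_nhds ⟨hr, hρ⟩)).differentiableAt one_ne_zero
  have hslice1' : DifferentiableAt ℝ (fun x => h (x, p.2)) p.1 :=
    hdh.comp p.1 (differentiableAt_id.prodMk (differentiableAt_const _))
  have hslice2' : DifferentiableAt ℝ (fun y => h (p.1, y)) p.2 :=
    hdh.comp p.2 ((differentiableAt_const _).prodMk differentiableAt_id)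
  set d1 := deriv (fun x => h (x, p.2)) p.1 with hd1_def
  set d2 := deriv (fun y => h (p.1, y)) p.2 with hd2_def
  have hslice1 : HasDerivAt (fun x => h (x, p.2)) d1 p.1 := hslice1'.hasDerivAt
  have hslice2 : HasDerivAt (fun y => h (p.1, y)) d2 p.2 := hslice2'.hasDerivAt
  -- derivative of each omega factor
  set ℓ : Fin n → ℝ := fun j => c j * (-(p.1 ^ (-(γ j + 1)))) / omega p.1 (γ j) with hℓ_def
  have hfac : ∀ j ∈ Finset.univ, HasDerivAt (fun x => omega x (γ j) ^ c j)
      ((omega p.1 (γ j)) ^ c j * ℓ j) p.1 := by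
    intro j _
    have := (hasDerivAt_omega hr0 (γ j)).rpow_const (p := c j) (Or.inl (hωpos j).ne')
    convert this using 1
    rw [show c j - 1 = c j - 1 from rfl, Real.rpow_sub (hωpos j) (c j) 1, Real.rpow_one]
    field_simp [hℓ_def]
    ring
  have hprod := hasDerivAt_finset_prod Finset.univ _ ℓ p.1 hfac
  set P := ∏ j, omega p.1 (γ j) ^ c j with hP_def
  set S := ∑ j, ℓ j with hS_def
  -- derivative of r ↦ r^a and ρ ↦ ρ^b
  have hra : HasDerivAt (fun x : ℝ => x ^ a) (a * p.1 ^ (a - 1)) p.1 :=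
    Real.hasDerivAt_rpow_const (Or.inl hr0.ne')
  have hrb : HasDerivAt (fun y : ℝ => y ^ b) (b * p.2 ^ (b - 1)) p.2 :=
    Real.hasDerivAt_rpow_const (Or.inl hρ0.ne')
  -- full slice derivatives
  have hD1 : HasDerivAt (fun x => genMonomial a b γ c (x, p.2) * (1 + h (x, p.2)))
      (((a * p.1 ^ (a - 1)) * p.2 ^ b * P + p.1 ^ a * p.2 ^ b * (P * S)) * (1 + h (p.1, p.2))
        + p.1 ^ a * p.2 ^ b * P * d1) p.1 := by
    have := ((hra.mul_const (p.2 ^ b)).mul hprod).mul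
      ((hasDerivAt_const p.1 (1:ℝ)).add hslice1)
    refine this.congr_deriv ?_
    simp only [Pi.add_apply, Pi.mul_apply, ← hP_def]
    ring
  have hD2 : HasDerivAt (fun y => genMonomial a b γ c (p.1, y) * (1 + h (p.1, y)))
      ((p.1 ^ a * (b * p.2 ^ (b - 1)) * P) * (1 + h (p.1, p.2))
        + p.1 ^ a * p.2 ^ b * P * d2) p.2 := by
    have := ((hrb.const_mul (p.1 ^ a)).mul_const P).mul
      ((hasDerivAt_const p.2 (1:ℝ)).add hslice2)
    refine this.congr_deriv ?_
    simp only [Pi.add_apply, Pi.mul_apply, ← hP_def]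
    ring
  -- rewrite the sum in Q
  have hSrw : ∑ j, c j * (-(p.1 ^ (-(γ j))) / omega p.1 (γ j)) = p.1 * S := by
    rw [hS_def, Finset.mul_sum]
    refine Finset.sum_congr rfl fun j _ => ?_
    rw [hℓ_def]
    have : p.1 * p.1 ^ (-(γ j + 1)) = p.1 ^ (-(γ j)) := by
      rw [show -(γ j + 1) = -(γ j) + (-1) by ring, Real.rpow_add hr0, Real.rpow_neg_one]
      field_simp
    field_simp [(hωpos j).ne']
    rw [← this]
    ring
  -- conclude
  have hM : genMonomial a b γ c p = p.1 ^ a * p.2 ^ b * P := rfl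
  have hMne : p.1 ^ a * p.2 ^ b * P ≠ 0 := by positivity
  have hLXval : LX (fun q => genMonomial a b γ c q * (1 + h q)) p =
      p.1 * (((a * p.1 ^ (a - 1)) * p.2 ^ b * P + p.1 ^ a * p.2 ^ b * (P * S))
          * (1 + h (p.1, p.2)) + p.1 ^ a * p.2 ^ b * P * d1)
        - p.2 * ((p.1 ^ a * (b * p.2 ^ (b - 1)) * P) * (1 + h (p.1, p.2))
          + p.1 ^ a * p.2 ^ b * P * d2) := by
    rw [LX, hD1.deriv, hD2.deriv]
  rw [hQ_def]
  simp only
  rw [hSrw, hLXval, hM, LX, ← hd1_def, ← hd2_def]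
  have hpa : p.1 ^ (a - 1) = p.1 ^ a / p.1 := by
    rw [Real.rpow_sub hr0, Real.rpow_one]
  have hpb : p.2 ^ (b - 1) = p.2 ^ b / p.2 := by
    rw [Real.rpow_sub hρ0, Real.rpow_one]
  have hph : h p = h (p.1, p.2) := rfl
  rw [hph, hpa, hpb, eq_div_iff hMne]
  field_simp
  ring
end
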